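/- arXiv:2106.16001 — 4 statements merged into one kernel-verified Lean document; each statement's English description precedes it below -/
import Mathlib

section
/- For every v ∈ U and every γ > 0, the supremum over y₀ ∈ G of J(v, y₀) − J(0, y₀) − γ‖y₀‖² equals J(v, 0) − J(0, 0) + (β²/γ)‖T*(S v)‖², where T* is the Hilbert adjoint of T. (This identifies the low-regret min–max problem with the minimization of the functional J^γ.) -/
open RealInnerProductSpace

/-- For every `v` and every `γ > 0`,
`sup_{y₀ ∈ G} (J(v, y₀) − J(0, y₀) − γ‖y₀‖²) = J(v, 0) − J(0, 0) + (β²/γ)‖T*(S v)‖²`. -/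
theorem stmt_9 {U H G : Type*}
    [NormedAddCommGroup U] [InnerProductSpace ℝ U] [CompleteSpace U]
    [NormedAddCommGroup H] [InnerProductSpace ℝ H] [CompleteSpace H]
    [NormedAddCommGroup G] [InnerProductSpace ℝ G] [CompleteSpace G]
    (S : U →L[ℝ] H) (T : G →L[ℝ] H) (zbar : H) (β μ : ℝ) (hβ : 0 < β) (hμ : 0 < μ)
    (J : U → G → ℝ)
    (hJ : ∀ v y₀, J v y₀ = β * ‖S v + T y₀ - zbar‖ ^ 2 + μ * ‖v‖ ^ 2) :
    ∀ (v : U) (γ : ℝ), 0 < γ →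
      sSup (Set.range fun y₀ : G => J v y₀ - J 0 y₀ - γ * ‖y₀‖ ^ 2)
        = J v 0 - J 0 0
          + (β ^ 2 / γ) * ‖(ContinuousLinearMap.adjoint T) (S v)‖ ^ 2 := by
  intro v γ hγ
  set w : G := (ContinuousLinearMap.adjoint T) (S v) with hw
  set A : ℝ := J v 0 - J 0 0 + (β ^ 2 / γ) * ‖w‖ ^ 2 with hA
  have key : ∀ y₀ : G, J v y₀ - J 0 y₀ - γ * ‖y₀‖ ^ 2
      = A - γ * ‖y₀ - (β / γ) • w‖ ^ 2 := by
    intro y₀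
    have hγ0 : γ ≠ 0 := ne_of_gt hγ
    have hinner : ⟪S v, T y₀⟫ = ⟪w, y₀⟫ := by
      rw [hw, ContinuousLinearMap.adjoint_inner_left]
    simp only [hA, hJ, map_zero, zero_add, add_zero, norm_zero]
    have e1 : S v + T y₀ - zbar = S v + (T y₀ - zbar) := by abel
    have e2 : (0:H) - zbar = -zbar := by abel
    rw [e1, e2, norm_add_sq_real, norm_neg, norm_sub_sq_real (y₀),
      norm_sub_sq_real (S v), norm_sub_sq_real (T y₀),
      norm_smul, real_inner_smul_right, inner_sub_right, hinner,
      real_inner_comm y₀ w]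
    simp only [Real.norm_eq_abs, abs_of_pos (div_pos hβ hγ)]
    field_simp
    ring
  apply IsGreatest.csSup_eq
  constructor
  · exact ⟨(β / γ) • w, by simp only [key]; simp⟩
  · rintro x ⟨y₀, rfl⟩
    simp only [key]
    nlinarith [sq_nonneg ‖y₀ - (β / γ) • w‖, hγ]
end

section
/- Discrete duality identity (eq. duality_1 of the paper): suppose y⁰ = 0 and (y^{n+1} − y^n)/δt + A y^{n+1} = B v^{n+1} for all n with 0 ≤ n ≤ M−1, and suppose p^{M+1} = 0 and (p^n − p^{n+1})/δt + Aᵀ p^n = f^n − σ^n for all n with 1 ≤ n ≤ M. Then Σ_{n=1}^{M} δt ⟨y^n, f^n − σ^n⟩ = Σ_{n=1}^{M} δt ⟨B v^n, p^n⟩. -/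
/-!
Pair the state equation at step `n` with `p^n` and the adjoint equation at step `n` with `y^n`.
After multiplying by `δt`, the terms `δt ⟨A y^n, p^n⟩ = δt ⟨y^n, Aᵀ p^n⟩` cancel, and the
difference of the two pairings is `⟨y^n, p^{n+1}⟩ - ⟨y^{n-1}, p^n⟩`. Summing over `n`
telescopes to `⟨y^M, p^{M+1}⟩ - ⟨y^0, p^1⟩`, which vanishes by the initial and final conditions.
-/

open Matrix Finset

theorem Matrix.implicit_euler_step_duality {K ι : Type*} [Field K] [Fintype ι]
    (A : Matrix ι ι K) {δt : K} (hδt : δt ≠ 0) {y y' p p' b g : ι → K}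
    (hy : (1 / δt) • (y' - y) + A *ᵥ y' = b)
    (hp : (1 / δt) • (p - p') + Aᵀ *ᵥ p = g) :
    δt * (b ⬝ᵥ p) - δt * (y' ⬝ᵥ g) = y' ⬝ᵥ p' - y ⬝ᵥ p := by
  have h_adjoint : y' ⬝ᵥ Aᵀ *ᵥ p = A *ᵥ y' ⬝ᵥ p := by
    rw [dotProduct_mulVec, vecMul_transpose]
  subst hy hp
  simp only [dotProduct_add, add_dotProduct, dotProduct_smul, smul_dotProduct, smul_eq_mul,
    dotProduct_sub, sub_dotProduct, h_adjoint]
  field_simp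
  ring

theorem stmt_15_general {N M : ℕ} (hM : 1 ≤ M)
    (δt : ℝ) (hδt : 0 < δt)
    (A B : Matrix (Fin N) (Fin N) ℝ)
    (y v p f σ : ℕ → (Fin N → ℝ))
    (hy0 : y 0 = 0)
    (hy : ∀ n, n ≤ M - 1 →
      (1 / δt) • (y (n + 1) - y n) + A.mulVec (y (n + 1)) = B.mulVec (v (n + 1)))
    (hpM : p (M + 1) = 0)
    (hp : ∀ n, 1 ≤ n → n ≤ M →
      (1 / δt) • (p n - p (n + 1)) + Aᵀ.mulVec (p n) = f n - σ n) :
    ∑ n ∈ Finset.Icc 1 M, δt * (y n ⬝ᵥ (f n - σ n))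
      = ∑ n ∈ Finset.Icc 1 M, δt * (B.mulVec (v n) ⬝ᵥ p n) := by
  have h_step : ∀ n ∈ Icc 1 M, δt * (B *ᵥ v n ⬝ᵥ p n) - δt * (y n ⬝ᵥ (f n - σ n))
      = y n ⬝ᵥ p (n + 1) - y (n - 1) ⬝ᵥ p n := by
    intro n hn
    obtain ⟨h1n, hnM⟩ := mem_Icc.mp hn
    have hyn := hy (n - 1) (Nat.sub_le_sub_right hnM 1)
    rw [Nat.sub_add_cancel h1n] at hyn
    exact A.implicit_euler_step_duality hδt.ne' hyn (hp n h1n hnM)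
  refine (sub_eq_zero.mp ?_).symm
  calc ∑ n ∈ Icc 1 M, δt * (B *ᵥ v n ⬝ᵥ p n) - ∑ n ∈ Icc 1 M, δt * (y n ⬝ᵥ (f n - σ n))
      = ∑ n ∈ Icc 1 M, (y n ⬝ᵥ p (n + 1) - y (n - 1) ⬝ᵥ p n) := by
        rw [← sum_sub_distrib]; exact sum_congr rfl h_step
    _ = y M ⬝ᵥ p (M + 1) - y 0 ⬝ᵥ p 1 := sum_Icc_sub hM (fun n => y (n - 1) ⬝ᵥ p n)
    _ = 0 := by simp [hy0, hpM]

/-- Discrete duality identity (eq. duality_1): if `y⁰ = 0`,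
`(y^{n+1} − y^n)/δt + A y^{n+1} = B v^{n+1}` for `0 ≤ n ≤ M−1`, `p^{M+1} = 0` and
`(p^n − p^{n+1})/δt + Aᵀ p^n = f^n − σ^n` for `1 ≤ n ≤ M`, then
`Σ_{n=1}^{M} δt ⟨y^n, f^n − σ^n⟩ = Σ_{n=1}^{M} δt ⟨B v^n, p^n⟩`. -/
theorem stmt_15 {N M : ℕ} (hN : 1 ≤ N) (hM : 1 ≤ M)
    (δt : ℝ) (hδt : 0 < δt)
    (A B : Matrix (Fin N) (Fin N) ℝ)
    (y v p f σ : ℕ → (Fin N → ℝ))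
    (hy0 : y 0 = 0)
    (hy : ∀ n, n ≤ M - 1 →
      (1 / δt) • (y (n + 1) - y n) + A.mulVec (y (n + 1)) = B.mulVec (v (n + 1)))
    (hpM : p (M + 1) = 0)
    (hp : ∀ n, 1 ≤ n → n ≤ M →
      (1 / δt) • (p n - p (n + 1)) + Aᵀ.mulVec (p n) = f n - σ n) :
    ∑ n ∈ Finset.Icc 1 M, δt * (y n ⬝ᵥ (f n - σ n))
      = ∑ n ∈ Finset.Icc 1 M, δt * (B.mulVec (v n) ⬝ᵥ p n) :=
  stmt_15_general hM δt hδt A B y v p f σ hy0 hy hpM hp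
end

section
/- Discrete duality identity (eq. duality_2 of the paper): let β, γ > 0 and σ₀ ∈ ℝ^N. Suppose σ⁰ = −(β/γ)σ₀ and (σ^{n+1} − σ^n)/δt + A σ^{n+1} = 0 for all n with 0 ≤ n ≤ M−1, and suppose ξ^{M+1} = 0 and (ξ^n − ξ^{n+1})/δt + Aᵀ ξ^n = y^n for all n with 1 ≤ n ≤ M. Then Σ_{n=1}^{M} δt ⟨σ^n, y^n⟩ = −(β/γ)⟨σ₀, ξ^1⟩. -/
/-!
Pairing the implicit Euler step for `σ` with the adjoint step for `ξ` turns each summand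
`δt ⟨σⁿ, yⁿ⟩` into `⟨σⁿ⁻¹, ξⁿ⟩ - ⟨σⁿ, ξⁿ⁺¹⟩`, since `δt ⟨A σⁿ, ξⁿ⟩ = ⟨σⁿ⁻¹ - σⁿ, ξⁿ⟩`.
The sum telescopes to `⟨σ⁰, ξ¹⟩ - ⟨σᴹ, ξᴹ⁺¹⟩ = ⟨σ⁰, ξ¹⟩`.
-/

open Matrix Finset

theorem Matrix.mul_dotProduct_adjoint_implicitEuler {K ι : Type*} [Field K] [Fintype ι]
    (A : Matrix ι ι K) {δt : K} (hδt : δt ≠ 0) {u v w w' : ι → K}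
    (hv : (1 / δt) • (v - u) + A *ᵥ v = 0) :
    δt * (v ⬝ᵥ ((1 / δt) • (w - w') + Aᵀ *ᵥ w)) = u ⬝ᵥ w - v ⬝ᵥ w' := by
  have hAv : A *ᵥ v = (1 / δt) • (u - v) := by
    rw [eq_neg_of_add_eq_zero_right hv, ← smul_neg, neg_sub]
  rw [dotProduct_add, dotProduct_smul, dotProduct_mulVec, vecMul_transpose, hAv,
    smul_dotProduct, smul_eq_mul, smul_eq_mul, dotProduct_sub, sub_dotProduct]
  field_simp
  ring

theorem Finset.sum_Icc_one_eq_sum_range {M : Type*} [AddCommMonoid M] (f : ℕ → M) (n : ℕ) :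
    ∑ i ∈ Icc 1 n, f i = ∑ i ∈ range n, f (i + 1) := by
  rw [range_eq_Ico, sum_Ico_add', ← Ico_add_one_right_eq_Icc]

theorem stmt_16_general {N M : ℕ}
    (δt : ℝ) (hδt : 0 < δt)
    (A : Matrix (Fin N) (Fin N) ℝ)
    (β γ : ℝ)
    (σ₀ : Fin N → ℝ)
    (y σ ξ : ℕ → (Fin N → ℝ))
    (hσ0 : σ 0 = -(β / γ) • σ₀)
    (hσ : ∀ n, n ≤ M - 1 →
      (1 / δt) • (σ (n + 1) - σ n) + A.mulVec (σ (n + 1)) = 0)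
    (hξM : ξ (M + 1) = 0)
    (hξ : ∀ n, 1 ≤ n → n ≤ M →
      (1 / δt) • (ξ n - ξ (n + 1)) + Aᵀ.mulVec (ξ n) = y n) :
    ∑ n ∈ Finset.Icc 1 M, δt * (σ n ⬝ᵥ y n) = -(β / γ) * (σ₀ ⬝ᵥ ξ 1) := by
  have hstep : ∀ k ∈ range M, δt * (σ (k + 1) ⬝ᵥ y (k + 1)) =
      σ k ⬝ᵥ ξ (k + 1) - σ (k + 1) ⬝ᵥ ξ (k + 1 + 1) := by
    intro k hk
    have hkM := mem_range.mp hk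
    rw [← hξ (k + 1) (by omega) hkM]
    exact mul_dotProduct_adjoint_implicitEuler A hδt.ne' (hσ k (by omega))
  rw [sum_Icc_one_eq_sum_range, sum_congr rfl hstep,
    sum_range_sub' (fun k ↦ σ k ⬝ᵥ ξ (k + 1)), hξM, dotProduct_zero, sub_zero, hσ0,
    smul_dotProduct, smul_eq_mul]

/-- Discrete duality identity (eq. duality_2): if `σ⁰ = −(β/γ)σ₀`,
`(σ^{n+1} − σ^n)/δt + A σ^{n+1} = 0` for `0 ≤ n ≤ M−1`, `ξ^{M+1} = 0` and
`(ξ^n − ξ^{n+1})/δt + Aᵀ ξ^n = y^n` for `1 ≤ n ≤ M`, then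
`Σ_{n=1}^{M} δt ⟨σ^n, y^n⟩ = −(β/γ)⟨σ₀, ξ^1⟩`. -/
theorem stmt_16 {N M : ℕ} (hN : 1 ≤ N) (hM : 1 ≤ M)
    (δt : ℝ) (hδt : 0 < δt)
    (A B : Matrix (Fin N) (Fin N) ℝ)
    (β γ : ℝ) (hβ : 0 < β) (hγ : 0 < γ)
    (σ₀ : Fin N → ℝ)
    (y σ ξ : ℕ → (Fin N → ℝ))
    (hσ0 : σ 0 = -(β / γ) • σ₀)
    (hσ : ∀ n, n ≤ M - 1 →
      (1 / δt) • (σ (n + 1) - σ n) + A.mulVec (σ (n + 1)) = 0)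
    (hξM : ξ (M + 1) = 0)
    (hξ : ∀ n, 1 ≤ n → n ≤ M →
      (1 / δt) • (ξ n - ξ (n + 1)) + Aᵀ.mulVec (ξ n) = y n) :
    ∑ n ∈ Finset.Icc 1 M, δt * (σ n ⬝ᵥ y n) = -(β / γ) * (σ₀ ⬝ᵥ ξ 1) :=
  stmt_16_general δt hδt A β γ σ₀ y σ ξ hσ0 hσ hξM hξ
end

section
/- Discrete adjoint representation for the low-regret operator: let β, γ > 0 and σ₀ ∈ ℝ^N. Suppose (i) y⁰ = 0 and (y^{n+1} − y^n)/δt + A y^{n+1} = B v^{n+1} for 0 ≤ n ≤ M−1; (ii) ξ^{M+1} = 0 and (ξ^n − ξ^{n+1})/δt + Aᵀ ξ^n = y^n for 1 ≤ n ≤ M; (iii) σ⁰ = −(β/γ)σ₀ and (σ^{n+1} − σ^n)/δt + A σ^{n+1} = 0 for 0 ≤ n ≤ M−1; (iv) p^{M+1} = 0 and (p^n − p^{n+1})/δt + Aᵀ p^n = f^n − σ^n for 1 ≤ n ≤ M. Then (β/γ)⟨ξ^1, σ₀⟩ + Σ_{n=1}^{M} δt ⟨y^n, f^n⟩ = Σ_{n=1}^{M}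 δt ⟨B v^n, p^n⟩. -/
open Matrix

lemma adj_dot {N : ℕ} (A : Matrix (Fin N) (Fin N) ℝ) (x z : Fin N → ℝ) :
    A.mulVec x ⬝ᵥ z = x ⬝ᵥ Aᵀ.mulVec z := by
  rw [dotProduct_comm, Matrix.dotProduct_mulVec, Matrix.mulVec_transpose, dotProduct_comm]

lemma adj_dot' {N : ℕ} (A : Matrix (Fin N) (Fin N) ℝ) (x z : Fin N → ℝ) :
    z ⬝ᵥ A.mulVec x = Aᵀ.mulVec z ⬝ᵥ x := by
  rw [Matrix.dotProduct_mulVec, ← Matrix.mulVec_transpose]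

/-- Discrete adjoint representation for the low-regret operator: under the
forward system for `y`, the backward system for `ξ`, the forward system for `σ`
and the backward system for `p`, one has
`(β/γ)⟨ξ^1, σ₀⟩ + Σ_{n=1}^{M} δt ⟨y^n, f^n⟩ = Σ_{n=1}^{M} δt ⟨B v^n, p^n⟩`. -/
theorem stmt_17 {N M : ℕ} (hN : 1 ≤ N) (hM : 1 ≤ M)
    (δt : ℝ) (hδt : 0 < δt)
    (A B : Matrix (Fin N) (Fin N) ℝ)
    (β γ : ℝ) (hβ : 0 < β) (hγ : 0 < γ)
    (σ₀ : Fin N → ℝ)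
    (y v ξ σ p f : ℕ → (Fin N → ℝ))
    (hy0 : y 0 = 0)
    (hy : ∀ n, n ≤ M - 1 →
      (1 / δt) • (y (n + 1) - y n) + A.mulVec (y (n + 1)) = B.mulVec (v (n + 1)))
    (hξM : ξ (M + 1) = 0)
    (hξ : ∀ n, 1 ≤ n → n ≤ M →
      (1 / δt) • (ξ n - ξ (n + 1)) + Aᵀ.mulVec (ξ n) = y n)
    (hσ0 : σ 0 = -(β / γ) • σ₀)
    (hσ : ∀ n, n ≤ M - 1 →
      (1 / δt) • (σ (n + 1) - σ n) + A.mulVec (σ (n + 1)) = 0)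
    (hpM : p (M + 1) = 0)
    (hp : ∀ n, 1 ≤ n → n ≤ M →
      (1 / δt) • (p n - p (n + 1)) + Aᵀ.mulVec (p n) = f n - σ n) :
    (β / γ) * (ξ 1 ⬝ᵥ σ₀) + ∑ n ∈ Finset.Icc 1 M, δt * (y n ⬝ᵥ f n)
      = ∑ n ∈ Finset.Icc 1 M, δt * (B.mulVec (v n) ⬝ᵥ p n) := by
  have hδt' : δt ≠ 0 := ne_of_gt hδt
  set W : ℕ → ℝ := fun n => y n ⬝ᵥ p (n + 1) + ξ (n + 1) ⬝ᵥ σ n with hW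
  -- per-step identity
  have key : ∀ m : ℕ, m < M →
      δt * (y (m + 1) ⬝ᵥ f (m + 1)) - δt * (B.mulVec (v (m + 1)) ⬝ᵥ p (m + 1))
        = W m - W (m + 1) := by
    intro m hm
    have h1 : 1 ≤ m + 1 := by omega
    have h2 : m + 1 ≤ M := by omega
    have h3 : m ≤ M - 1 := by omega
    -- E1 from hp at m+1, dotted on the left with y (m+1)
    have E1 : (y (m+1) ⬝ᵥ p (m+1)) - (y (m+1) ⬝ᵥ p (m+1+1))
          + δt * (y (m+1) ⬝ᵥ Aᵀ.mulVec (p (m+1)))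
        = δt * (y (m+1) ⬝ᵥ f (m+1)) - δt * (y (m+1) ⬝ᵥ σ (m+1)) := by
      have h := congrArg (fun u => y (m+1) ⬝ᵥ u) (hp (m+1) h1 h2)
      simp only [dotProduct_add, dotProduct_smul, dotProduct_sub, smul_eq_mul] at h
      field_simp at h
      linear_combination h
    -- E2 from hy at m, dotted on the right with p (m+1)
    have E2 : (y (m+1) ⬝ᵥ p (m+1)) - (y m ⬝ᵥ p (m+1))
          + δt * (y (m+1) ⬝ᵥ Aᵀ.mulVec (p (m+1)))
        = δt * (B.mulVec (v (m+1)) ⬝ᵥ p (m+1)) := by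
      have h := congrArg (fun u => u ⬝ᵥ p (m+1)) (hy m h3)
      simp only [add_dotProduct, smul_dotProduct, sub_dotProduct, smul_eq_mul] at h
      rw [adj_dot] at h
      field_simp at h
      linear_combination h
    -- E3 from hξ at m+1, dotted on the right with σ (m+1)
    have E3 : (ξ (m+1) ⬝ᵥ σ (m+1)) - (ξ (m+1+1) ⬝ᵥ σ (m+1))
          + δt * (Aᵀ.mulVec (ξ (m+1)) ⬝ᵥ σ (m+1))
        = δt * (y (m+1) ⬝ᵥ σ (m+1)) := by
      have h := congrArg (fun u => u ⬝ᵥ σ (m+1)) (hξ (m+1) h1 h2)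
      simp only [add_dotProduct, smul_dotProduct, sub_dotProduct, smul_eq_mul] at h
      field_simp at h
      linear_combination h
    -- E4 from hσ at m, dotted on the left with ξ (m+1)
    have E4 : (ξ (m+1) ⬝ᵥ σ (m+1)) - (ξ (m+1) ⬝ᵥ σ m)
          + δt * (Aᵀ.mulVec (ξ (m+1)) ⬝ᵥ σ (m+1)) = 0 := by
      have h := congrArg (fun u => ξ (m+1) ⬝ᵥ u) (hσ m h3)
      simp only [dotProduct_add, dotProduct_smul, dotProduct_sub, smul_eq_mul,
        dotProduct_zero] at h
      rw [adj_dot'] at h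
      field_simp at h
      linear_combination h
    simp only [hW]
    linear_combination E2 + E4 - E1 - E3
  -- rewrite sums over Icc as sums over range
  have hIcc : ∀ g : ℕ → ℝ,
      ∑ n ∈ Finset.Icc 1 M, g n = ∑ i ∈ Finset.range M, g (i + 1) := by
    intro g
    rw [← Finset.Ico_add_one_right_eq_Icc, Finset.sum_Ico_eq_sum_range]
    simp [Nat.add_comm]
  rw [hIcc, hIcc]
  have tel : ∑ i ∈ Finset.range M,
      (δt * (y (i + 1) ⬝ᵥ f (i + 1)) - δt * (B.mulVec (v (i + 1)) ⬝ᵥ p (i + 1)))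
      = W 0 - W M := by
    rw [← Finset.sum_range_sub' W M]
    exact Finset.sum_congr rfl fun i hi => key i (Finset.mem_range.mp hi)
  have hW0 : W 0 = -((β / γ) * (ξ 1 ⬝ᵥ σ₀)) := by
    simp only [hW, hy0, hσ0, zero_dotProduct, dotProduct_smul, smul_eq_mul, zero_add,
      Nat.zero_add]
    ring
  have hWM : W M = 0 := by
    simp [hW, hpM, hξM]
  rw [Finset.sum_sub_distrib] at tel
  rw [hW0, hWM, sub_zero] at tel
  linarith [tel]
end
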